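/- If the circuit power satisfies P^C > 0, then there exists a unique T* > 0 such that the derivative of the NOMA per-device energy function E vanishes at T*; moreover E is strictly decreasing on (0, T*) and strictly increasing on (T*, ∞), so T* is the unique minimizer of E on (0, ∞). -/

import Mathlib

/-!
With `C = σ² / (η h²)` and `x = 1 / t`, the energy is the perspective
`E t = C t F (1 / t) + t P^C` of
`F x = ∑ₗ (exp (a_l x) - 1) (exp (a_j x) - 1) exp (b_l x) + (exp (a_j x) - 1)`, so
`E' t = C (F x - x F' x) + P^C`, where `F x - x F' x` is the value at `0` of the tangent line of
`F` at `x`. Each summand of `F` is a product of nonnegative, nondecreasing convex functions on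
`[0, ∞)`, hence convex, and `exp (a_j x) - 1` is strictly convex. So the tangent intercept
decreases strictly from `F 0 = 0`, and the exponential term drives it to `-∞`. Hence `E'` is
strictly increasing in `t`, negative for small `t` and positive for large `t`.
-/

open Real Set

lemma hasDerivAt_exp_mul (a x : ℝ) : HasDerivAt (fun x => exp (a * x)) (a * exp (a * x)) x := by
  simpa [mul_comm] using ((hasDerivAt_id x).const_mul a).exp

lemma convexOn_exp_mul (a : ℝ) : ConvexOn ℝ univ (fun x => exp (a * x)) :=
  (convexOn_exp.comp_linearMap (LinearMap.mul ℝ ℝ a) :)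

lemma strictConvexOn_exp_mul {a : ℝ} (ha : 0 < a) :
    StrictConvexOn ℝ univ (fun x => exp (a * x)) := by
  refine StrictMonoOn.strictConvexOn_of_deriv convex_univ (by fun_prop) ?_
  intro x _ y _ hxy
  rw [(hasDerivAt_exp_mul a x).deriv, (hasDerivAt_exp_mul a y).deriv]
  gcongr

theorem ConvexOn.fun_sum {𝕜 E β ι : Type*} [Semiring 𝕜] [PartialOrder 𝕜]
    [AddCommMonoid E] [AddCommMonoid β] [PartialOrder β] [IsOrderedAddMonoid β] [SMul 𝕜 E]
    [Module 𝕜 β]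
    {s : Set E} (hs : Convex 𝕜 s) {t : Finset ι} {f : ι → E → β}
    (hf : ∀ i ∈ t, ConvexOn 𝕜 s (f i)) : ConvexOn 𝕜 s (fun x => ∑ i ∈ t, f i x) := by
  classical
  induction t using Finset.induction_on with
  | empty => simpa using convexOn_const (0 : β) hs
  | insert i t hi ih =>
    simp only [Finset.sum_insert hi]
    exact (hf i (t.mem_insert_self i)).add (ih fun k hk => hf k (Finset.mem_insert_of_mem hk))

lemma convexOn_interference {p q r : ℝ} (hp : 0 ≤ p) (hq : 0 ≤ q) (hr : 0 ≤ r) :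
    ConvexOn ℝ (Ici 0) (fun x => (exp (p * x) - 1) * (exp (q * x) - 1) * exp (r * x)) := by
  have convex (c : ℝ) : ConvexOn ℝ (Ici 0) (fun x => exp (c * x)) :=
    (convexOn_exp_mul c).subset (subset_univ _) (convex_Ici 0)
  have mono {c : ℝ} (hc : 0 ≤ c) : MonotoneOn (fun x => exp (c * x)) (Ici 0) :=
    fun x _ y _ hxy => by dsimp only; gcongr
  have convex' (c : ℝ) : ConvexOn ℝ (Ici 0) (fun x => exp (c * x) - 1) :=
    (convex c).add_const (-1)
  have mono' {c : ℝ} (hc : 0 ≤ c) : MonotoneOn (fun x => exp (c * x) - 1) (Ici 0) :=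
    fun x hx y hy hxy => sub_le_sub_right (mono hc hx hy hxy) 1
  have nonneg' {c : ℝ} (hc : 0 ≤ c) (x : ℝ) (hx : x ∈ Ici 0) : 0 ≤ exp (c * x) - 1 :=
    sub_nonneg.2 (one_le_exp (mul_nonneg hc hx))
  refine ((convex' p).mul (convex' q) (nonneg' hp) (nonneg' hq)
    ((mono' hp).monovaryOn (mono' hq))).mul (convex r)
    (fun x hx => mul_nonneg (nonneg' hp x hx) (nonneg' hq x hx)) (fun x _ => (exp_pos _).le) ?_
  exact ((mono' hp).mul (mono' hq) (nonneg' hp) (nonneg' hq)).monovaryOn (mono hr)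

noncomputable def tangentIntercept (f : ℝ → ℝ) (x : ℝ) : ℝ := f x - x * deriv f x

lemma hasDerivAt_mul_comp_inv {f : ℝ → ℝ} {x : ℝ} (hx : x ≠ 0)
    (hf : DifferentiableAt ℝ f x⁻¹) :
    HasDerivAt (fun t => t * f t⁻¹) (tangentIntercept f x⁻¹) x := by
  refine ((hasDerivAt_id' x).mul (hf.hasDerivAt.comp x (hasDerivAt_inv hx))).congr_deriv ?_
  simp only [tangentIntercept, Function.comp_apply]
  field_simp
  ring

lemma tangentIntercept_add {f g : ℝ → ℝ} {x : ℝ} (hf : DifferentiableAt ℝ f x)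
    (hg : DifferentiableAt ℝ g x) :
    tangentIntercept (fun y => f y + g y) x = tangentIntercept f x + tangentIntercept g x := by
  simp only [tangentIntercept, deriv_fun_add hf hg]
  ring

lemma ConvexOn.tangentIntercept_le {f : ℝ → ℝ} {s : Set ℝ} {x : ℝ} (hf : ConvexOn ℝ s f)
    (h0 : 0 ∈ s) (hx : x ∈ s) (hd : DifferentiableAt ℝ f x) :
    tangentIntercept f x ≤ f 0 := by
  unfold tangentIntercept
  rcases lt_trichotomy x 0 with hneg | rfl | hpos
  · have := hf.deriv_le_slope hx h0 hneg hd
    rw [slope_def_field, le_div_iff₀ (by linarith)] at this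
    linarith
  · simp
  · have := hf.slope_le_deriv h0 hx hpos hd
    rw [slope_def_field, div_le_iff₀ (by linarith)] at this
    linarith

lemma StrictConvexOn.strictAntiOn_tangentIntercept {f : ℝ → ℝ} {s : Set ℝ}
    (hf : StrictConvexOn ℝ s f) (hs : s ⊆ Ici 0) (hd : ∀ x ∈ s, DifferentiableAt ℝ f x) :
    StrictAntiOn (tangentIntercept f) s := by
  intro x hx y hy hxy
  have hslope := hf.slope_lt_deriv hx hy hxy (hd y hy)
  rw [slope_def_field, div_lt_iff₀ (sub_pos.2 hxy)] at hslope
  have hderiv : x * deriv f x ≤ x * deriv f y :=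
    mul_le_mul_of_nonneg_left (hf.convexOn.monotoneOn_deriv hd hx hy hxy.le) (hs hx)
  unfold tangentIntercept
  linarith

lemma tangentIntercept_exp_mul_sub_one (a x : ℝ) :
    tangentIntercept (fun x => exp (a * x) - 1) x = exp (a * x) * (1 - a * x) - 1 := by
  simp only [tangentIntercept, ((hasDerivAt_exp_mul a x).sub_const 1).deriv]
  ring

lemma exists_tangentIntercept_exp_mul_sub_one_lt {a : ℝ} (ha : 0 < a) (M : ℝ) :
    ∃ x > 0, tangentIntercept (fun x => exp (a * x) - 1) x < M := by
  set c := |M| + 1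
  have hc : 1 ≤ c := le_add_of_nonneg_left (abs_nonneg M)
  refine ⟨c / a, by positivity, ?_⟩
  rw [tangentIntercept_exp_mul_sub_one, mul_div_cancel₀ c ha.ne']
  nlinarith [neg_abs_le M, mul_nonpos_of_nonneg_of_nonpos
    (sub_nonneg.2 (one_le_exp (by positivity : 0 ≤ c))) (sub_nonpos.2 hc)]

lemma ConvexOn.exists_tangentIntercept_add_exp_mul_sub_one_lt {G : ℝ → ℝ} {a : ℝ}
    (hG : ConvexOn ℝ (Ici 0) G) (hGd : Differentiable ℝ G) (ha : 0 < a) (M : ℝ) :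
    ∃ x > 0, tangentIntercept (fun x => G x + (exp (a * x) - 1)) x < M := by
  obtain ⟨x, hx, hlt⟩ := exists_tangentIntercept_exp_mul_sub_one_lt ha (M - G 0)
  refine ⟨x, hx, ?_⟩
  rw [tangentIntercept_add (hGd x) (by fun_prop)]
  linarith [hG.tangentIntercept_le self_mem_Ici (mem_Ici.2 hx.le) (hGd x)]

section StrictMonoDeriv

variable {E : ℝ → ℝ} {T : ℝ}

lemma strictAntiOn_Ioc_of_strictMonoOn_deriv (hE : ∀ t ∈ Ioi 0, DifferentiableAt ℝ E t)
    (hE' : StrictMonoOn (deriv E) (Ioi 0)) (hT : 0 < T) (hET : deriv E T = 0) :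
    StrictAntiOn E (Ioc 0 T) := by
  refine strictAntiOn_of_deriv_neg (convex_Ioc 0 T)
    (fun t ht => (hE t ht.1).continuousAt.continuousWithinAt) fun t ht => ?_
  rw [interior_Ioc] at ht
  exact hET ▸ hE' ht.1 hT ht.2

lemma strictMonoOn_Ici_of_strictMonoOn_deriv (hE : ∀ t ∈ Ioi 0, DifferentiableAt ℝ E t)
    (hE' : StrictMonoOn (deriv E) (Ioi 0)) (hT : 0 < T) (hET : deriv E T = 0) :
    StrictMonoOn E (Ici T) := by
  refine strictMonoOn_of_deriv_pos (convex_Ici T)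
    (fun t ht => (hE t (hT.trans_le ht)).continuousAt.continuousWithinAt) fun t ht => ?_
  rw [interior_Ici] at ht
  exact hET ▸ hE' hT (hT.trans ht) ht

lemma unimodal_of_strictMonoOn_deriv (hE : ∀ t ∈ Ioi 0, DifferentiableAt ℝ E t)
    (hE' : StrictMonoOn (deriv E) (Ioi 0)) (hT : 0 < T) (hET : deriv E T = 0) :
    (∀ T' : ℝ, 0 < T' → deriv E T' = 0 → T' = T) ∧
      StrictAntiOn E (Ioo 0 T) ∧ StrictMonoOn E (Ioi T) ∧
      (∀ t ∈ Ioi (0 : ℝ), t ≠ T → E T < E t) := by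
  have hanti := strictAntiOn_Ioc_of_strictMonoOn_deriv hE hE' hT hET
  have hmono := strictMonoOn_Ici_of_strictMonoOn_deriv hE hE' hT hET
  refine ⟨fun T' hT' h => hE'.injOn hT' hT (h.trans hET.symm),
    hanti.mono Ioo_subset_Ioc_self, hmono.mono Ioi_subset_Ici_self, fun t ht htT => ?_⟩
  rcases htT.lt_or_gt with hlt | hgt
  · exact hanti ⟨ht, hlt.le⟩ ⟨hT, le_rfl⟩ hlt
  · exact hmono self_mem_Ici hgt.le hgt

end StrictMonoDeriv

theorem exists_unique_deriv_eq_zero_of_perspective {F E : ℝ → ℝ} {C P : ℝ} (hC : 0 < C)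
    (hP : 0 < P) (hF : ContDiff ℝ 1 F) (hconv : StrictConvexOn ℝ (Ici 0) F) (hF0 : F 0 = 0)
    (hunbdd : ∀ M, ∃ x > 0, tangentIntercept F x < M)
    (hE : ∀ t, E t = C * (t * F t⁻¹) + t * P) :
    ∃ T : ℝ, 0 < T ∧ deriv E T = 0 ∧
      (∀ T' : ℝ, 0 < T' → deriv E T' = 0 → T' = T) ∧
      StrictAntiOn E (Ioo 0 T) ∧ StrictMonoOn E (Ioi T) ∧
      (∀ t ∈ Ioi (0 : ℝ), t ≠ T → E T < E t) := by
  have hFd : Differentiable ℝ F := hF.differentiable one_ne_zero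
  have hderiv (t : ℝ) (ht : 0 < t) : HasDerivAt E (C * tangentIntercept F t⁻¹ + P) t := by
    rw [funext hE]
    exact (((hasDerivAt_mul_comp_inv ht.ne' (hFd _)).const_mul C).add
      ((hasDerivAt_id' t).mul_const P)).congr_deriv (by ring)
  have hanti := hconv.strictAntiOn_tangentIntercept subset_rfl fun x _ => hFd x
  have hcont : Continuous (tangentIntercept F) :=
    hF.continuous.sub (continuous_id.mul (hF.continuous_deriv le_rfl))
  obtain ⟨x₀, hx₀, hlt⟩ := hunbdd (-P / C)
  obtain ⟨xs, ⟨hxs, -⟩, hzero⟩ :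
      ∃ xs ∈ Ioo 0 x₀, C * tangentIntercept F xs + P = 0 := by
    refine intermediate_value_Ioo' hx₀.le (by fun_prop) ⟨?_, ?_⟩
    · have := mul_lt_mul_of_pos_left hlt hC
      rw [mul_div_cancel₀ _ hC.ne'] at this
      linarith
    · simpa [tangentIntercept, hF0]
  have hmono : StrictMonoOn (deriv E) (Ioi 0) := fun s hs t ht hst => by
    rw [(hderiv s hs).deriv, (hderiv t ht).deriv]
    have := hanti (mem_Ici.2 (inv_pos.2 ht).le) (mem_Ici.2 (inv_pos.2 hs).le)
      (inv_strictAnti₀ hs hst)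
    gcongr
  have hxs' : deriv E xs⁻¹ = 0 := by rw [(hderiv _ (inv_pos.2 hxs)).deriv, inv_inv, hzero]
  exact ⟨xs⁻¹, inv_pos.2 hxs, hxs', unimodal_of_strictMonoOn_deriv
    (fun t ht => (hderiv t ht).differentiableAt) hmono (inv_pos.2 hxs) hxs'⟩

theorem stmt_5_general (j J : ℕ) (hjJ : j ≤ J)
    (D : ℕ → ℝ) (hD : ∀ l, j ≤ l → l ≤ J → 0 < D l)
    (B σ2 h η PC : ℝ) (hB : 0 < B) (hσ2 : 0 < σ2) (hh : 0 < h)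
    (hη0 : 0 < η) (hPC : 0 < PC)
    (a : ℕ → ℝ) (ha : ∀ l, a l = Real.log 2 * D l / B)
    (b : ℕ → ℝ) (hb : ∀ l, b l = Real.log 2 * (∑ s ∈ Finset.Ico (j + 1) l, D s) / B)
    (E : ℝ → ℝ)
    (hE : ∀ t : ℝ, E t =
      σ2 * t / (η * h ^ 2) *
        ((∑ l ∈ Finset.Icc (j + 1) J,
            (Real.exp (a l / t) - 1) * (Real.exp (a j / t) - 1) * Real.exp (b l / t))
          + (Real.exp (a j / t) - 1)) + t * PC) :
    ∃ T : ℝ, 0 < T ∧ deriv E T = 0 ∧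
      (∀ T' : ℝ, 0 < T' → deriv E T' = 0 → T' = T) ∧
      StrictAntiOn E (Set.Ioo 0 T) ∧ StrictMonoOn E (Set.Ioi T) ∧
      (∀ t ∈ Set.Ioi (0 : ℝ), t ≠ T → E T < E t) := by
  have hlog : 0 < log 2 := log_pos one_lt_two
  have haj : 0 < a j := by rw [ha]; exact div_pos (mul_pos hlog (hD j le_rfl hjJ)) hB
  have hal (l : ℕ) (hl : l ∈ Finset.Icc (j + 1) J) : 0 ≤ a l := by
    rw [Finset.mem_Icc] at hl
    rw [ha]; have := hD l (by omega) hl.2; positivity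
  have hbl (l : ℕ) (hl : l ∈ Finset.Icc (j + 1) J) : 0 ≤ b l := by
    rw [Finset.mem_Icc] at hl
    rw [hb]
    have : 0 ≤ ∑ s ∈ Finset.Ico (j + 1) l, D s := Finset.sum_nonneg fun s hs => by
      rw [Finset.mem_Ico] at hs; exact (hD s (by omega) (by omega)).le
    positivity
  set G := fun x => ∑ l ∈ Finset.Icc (j + 1) J,
    (exp (a l * x) - 1) * (exp (a j * x) - 1) * exp (b l * x)
  have hG : ConvexOn ℝ (Ici 0) G :=
    ConvexOn.fun_sum (convex_Ici 0) fun l hl => convexOn_interference (hal l hl) haj.le (hbl l hl)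
  refine exists_unique_deriv_eq_zero_of_perspective (F := fun x => G x + (exp (a j * x) - 1))
    (C := σ2 / (η * h ^ 2)) (by positivity) hPC (by fun_prop)
    (hG.add_strictConvexOn (((strictConvexOn_exp_mul haj).subset (subset_univ _)
      (convex_Ici 0)).add_const (-1))) (by simp [G])
    (hG.exists_tangentIntercept_add_exp_mul_sub_one_lt (by fun_prop) haj) fun t => ?_
  simp only [hE, G, div_eq_mul_inv]
  ring

/-- NOMA per-device energy function: statement 5 of the paper. -/
theorem stmt_5 (j J : ℕ) (hjJ : j ≤ J)
    (D : ℕ → ℝ) (hD : ∀ l, j ≤ l → l ≤ J → 0 < D l)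
    (B σ2 h η PC : ℝ) (hB : 0 < B) (hσ2 : 0 < σ2) (hh : 0 < h)
    (hη0 : 0 < η) (hη1 : η ≤ 1) (hPC : 0 < PC)
    (a : ℕ → ℝ) (ha : ∀ l, a l = Real.log 2 * D l / B)
    (b : ℕ → ℝ) (hb : ∀ l, b l = Real.log 2 * (∑ s ∈ Finset.Ico (j + 1) l, D s) / B)
    (E : ℝ → ℝ)
    (hE : ∀ t : ℝ, E t =
      σ2 * t / (η * h ^ 2) *
        ((∑ l ∈ Finset.Icc (j + 1) J,
            (Real.exp (a l / t) - 1) * (Real.exp (a j / t) - 1) * Real.exp (b l / t))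
          + (Real.exp (a j / t) - 1)) + t * PC) :
    ∃ T : ℝ, 0 < T ∧ deriv E T = 0 ∧
      (∀ T' : ℝ, 0 < T' → deriv E T' = 0 → T' = T) ∧
      StrictAntiOn E (Set.Ioo 0 T) ∧ StrictMonoOn E (Set.Ioi T) ∧
      (∀ t ∈ Set.Ioi (0 : ℝ), t ≠ T → E T < E t) :=
  stmt_5_general j J hjJ D hD B σ2 h η PC hB hσ2 hh hη0 hPC a ha b hb E hE
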